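/- arXiv:2205.15291 — 2 statements merged into one kernel-verified Lean document; each statement's English description precedes it below -/
import Mathlib

section
/- Let μ be a probability measure on ℝ whose cumulative distribution function F (defined by F(x) = μ((-∞, x])) is continuous. Then the pushforward of μ under F is the uniform probability measure on the interval [0,1] (probability integral transform). -/
/-!
For `0 ≤ t < 1`, the sublevel set `{F ≤ t}` of the continuous monotone CDF `F` is either empty
(forcing `t = 0`, since `F → 0` at `-∞`) or a closed half-line `Iic a` with `F a = t` by the
intermediate value theorem; either way it has `μ`-measure `t`, which is the CDF of the uniform
distribution on `[0,1]`.
-/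

open MeasureTheory Set ProbabilityTheory Filter Topology

theorem Monotone.exists_preimage_Iic_eq_Iic {α β : Type*} [ConditionallyCompleteLinearOrder α]
    [TopologicalSpace α] [OrderTopology α] [DenselyOrdered α] [LinearOrder β] [TopologicalSpace β]
    [OrderClosedTopology β] {f : α → β} (hmono : Monotone f) (hcont : Continuous f) {t : β}
    (hne : (f ⁻¹' Iic t).Nonempty) (hlt : ∃ b, t < f b) :
    ∃ a, f a = t ∧ f ⁻¹' Iic t = Iic a := by
  obtain ⟨b, hb⟩ := hlt
  have hbdd : BddAbove (f ⁻¹' Iic t) :=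
    ⟨b, fun x hx => (hmono.reflect_lt ((mem_Iic.mp hx).trans_lt hb)).le⟩
  set a := sSup (f ⁻¹' Iic t)
  have ha : f a ≤ t := (isClosed_Iic.preimage hcont).csSup_mem hne hbdd
  obtain ⟨c, hc, hfc⟩ := intermediate_value_Icc (hmono.reflect_lt (ha.trans_lt hb)).le
    hcont.continuousOn ⟨ha, hb.le⟩
  have hca : c = a := le_antisymm (le_csSup hbdd hfc.le) hc.1
  exact ⟨a, hca ▸ hfc, Subset.antisymm (fun x => le_csSup hbdd) fun x hx => (hmono hx).trans ha⟩

theorem Set.Iic_inter_Icc {α : Type*} [LinearOrder α] {a b c : α} :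
    Iic c ∩ Icc a b = Icc a (min c b) := by
  ext x; simp only [mem_inter_iff, mem_Iic, mem_Icc, le_min_iff]; tauto

theorem measure_cdf_preimage_Iic {μ : Measure ℝ} [IsProbabilityMeasure μ]
    (hcont : Continuous (cdf μ)) (t : ℝ) :
    μ (cdf μ ⁻¹' Iic t) = ENNReal.ofReal (min t 1) := by
  rcases le_or_gt 1 t with ht1 | ht1
  · have huniv : cdf μ ⁻¹' Iic t = univ := eq_univ_of_forall fun x => (cdf_le_one μ x).trans ht1
    rw [huniv, measure_univ, min_eq_right ht1, ENNReal.ofReal_one]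
  rw [min_eq_left ht1.le]
  rcases (cdf μ ⁻¹' Iic t).eq_empty_or_nonempty with hempty | hne
  · have ht0 : t ≤ 0 := ge_of_tendsto (tendsto_cdf_atBot μ) <| Eventually.of_forall fun x =>
      le_of_not_ge fun hx => hempty.subset hx
    rw [hempty, measure_empty, ENNReal.ofReal_of_nonpos ht0]
  · obtain ⟨a, hat, ha⟩ := (monotone_cdf μ).exists_preimage_Iic_eq_Iic hcont hne
      ((tendsto_cdf_atTop μ).eventually (eventually_gt_nhds ht1)).exists
    rw [ha, ← ofReal_cdf, hat]

/-- Probability integral transform: if the CDF `F` of a probability measure `μ` on `ℝ`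
is continuous, then the pushforward of `μ` under `F` is the uniform measure on `[0,1]`. -/
theorem probability_integral_transform
    (μ : Measure ℝ) [IsProbabilityMeasure μ]
    (F : ℝ → ℝ) (hF : ∀ x, F x = (μ (Iic x)).toReal)
    (hcont : Continuous F) :
    μ.map F = volume.restrict (Icc (0 : ℝ) 1) := by
  obtain rfl : F = cdf μ := funext fun x => by rw [hF, cdf_eq_real, measureReal_def]
  have : IsProbabilityMeasure (volume.restrict (Icc (0 : ℝ) 1)) := ⟨by simp⟩
  have : IsProbabilityMeasure (μ.map (cdf μ)) :=
    Measure.isProbabilityMeasure_map hcont.aemeasurable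
  refine Measure.ext_of_Iic _ _ fun t => ?_
  rw [Measure.map_apply hcont.measurable measurableSet_Iic,
    Measure.restrict_apply measurableSet_Iic, Iic_inter_Icc, Real.volume_Icc, sub_zero,
    measure_cdf_preimage_Iic hcont]
end

section
/- Let D be a set, f₁,…,f_k : D → ℝ, and for each i let F_i : ℝ → ℝ be strictly monotone increasing; define the scores S_i(x) = 1 − F_i(f_i(x)). Let w₁,…,w_k > 0. If x* ∈ D maximizes ∑_{i=1}^k w_i S_i(x) over D, then x* is Pareto efficient for the minimization of the original objectives (f₁,…,f_k). Hence the weighting method applied to scores yields Pareto efficient solutions of the original multi-objective problem whenever all weights are positive. -/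
/-- `x` is Pareto efficient for the minimization of the objectives `f i`. -/
def ParetoEffMin {D : Type*} {k : ℕ} (f : Fin k → D → ℝ) (x : D) : Prop :=
  ¬ ∃ y : D, (∀ i, f i y ≤ f i x) ∧ ∃ j, f j y < f j x

/-- The weighting method applied to scores `S i = 1 - F i ∘ f i` (with `F i` strictly
increasing) yields Pareto efficient solutions of the original minimization problem
whenever all weights are positive. -/
theorem weighting_on_scores_pareto {D : Type*} {k : ℕ}
    (f : Fin k → D → ℝ) (F : Fin k → ℝ → ℝ) (hF : ∀ i, StrictMono (F i))
    (S : Fin k → D → ℝ) (hS : ∀ i x, S i x = 1 - F i (f i x))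
    (w : Fin k → ℝ) (hw : ∀ i, 0 < w i) (x : D)
    (hx : ∀ y : D, ∑ i, w i * S i y ≤ ∑ i, w i * S i x) :
    ParetoEffMin f x := by
  rintro ⟨y, hle, j, hj⟩
  have hsum : ∑ i, w i * S i x < ∑ i, w i * S i y := by
    apply Finset.sum_lt_sum
    · intro i _
      have : F i (f i y) ≤ F i (f i x) := (hF i).monotone (hle i)
      rw [hS, hS]
      nlinarith [hw i]
    · refine ⟨j, Finset.mem_univ j, ?_⟩
      have : F j (f j y) < F j (f j x) := hF j hj
      rw [hS, hS]
      nlinarith [hw j]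
  exact absurd (hx y) (not_le.mpr hsum)
end
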